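/- Let A be an idempotent algebra, let S' ⊆ A² × {0,1}, and let (a,b) ∈ A². Suppose p is a ternary term that is a local difference term operation for S', and q is a ternary term that is a local difference term operation for the set {(x,y,1) : (x,y,1) ∈ S'} ∪ {(a, p^A(a,b,b), 0)}. Then the ternary term d(x,y,z) := q(x, p(x,y,y), p(x,y,z)) is a local difference term operation for S' ∪ {(a,b,0)}. -/

import Mathlib

open FirstOrder FirstOrder.Language FirstOrder.Language.Structure

/-- A congruence on an `L`-structure: an equivalence relation preserved by every
basic operation. -/
def IsCong (L : FirstOrder.Language) (A : Type*) [L.Structure A] (r : A → A → Prop) : Prop :=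
  Equivalence r ∧ ∀ (n : ℕ) (f : L.Functions n) (x y : Fin n → A),
    (∀ i, r (x i) (y i)) → r (funMap f x) (funMap f y)

/-- The congruence generated by a set of pairs: the intersection of all congruences
containing the set. -/
def cgSet (L : FirstOrder.Language) (A : Type*) [L.Structure A] (s : Set (A × A)) :
    A → A → Prop :=
  fun x y => ∀ r : A → A → Prop, IsCong L A r → (∀ p ∈ s, r p.1 p.2) → r x y

/-- `Cg^A(a,b)`: the least congruence containing `(a,b)`. -/
def cgPair (L : FirstOrder.Language) (A : Type*) [L.Structure A] (a b : A) : A → A → Prop :=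
  cgSet L A {(a, b)}

/-- The term condition `C(α,β;δ)`. -/
def TermCond (L : FirstOrder.Language) (A : Type*) [L.Structure A]
    (α β δ : A → A → Prop) : Prop :=
  ∀ (n : ℕ) (t : L.Term (Fin (n + 1))) (a a' : A), α a a' →
    ∀ u v : Fin n → A, (∀ i, β (u i) (v i)) →
      δ (t.realize (Fin.cons a u)) (t.realize (Fin.cons a v)) →
      δ (t.realize (Fin.cons a' u)) (t.realize (Fin.cons a' v))

/-- The commutator `[α,β]`: the least congruence `δ` such that `C(α,β;δ)` holds
(the intersection of all such `δ`). -/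
def commut (L : FirstOrder.Language) (A : Type*) [L.Structure A] (α β : A → A → Prop) :
    A → A → Prop :=
  fun x y => ∀ δ : A → A → Prop, IsCong L A δ → TermCond L A α β δ → δ x y

/-- An algebra is idempotent if every basic operation satisfies `f(a,…,a) = a`. -/
def IsIdem (L : FirstOrder.Language) (A : Type*) [L.Structure A] : Prop :=
  ∀ (n : ℕ) (f : L.Functions n) (a : A), funMap f (fun _ => a) = a

/-- A ternary term `d` is a difference term operation for `A` if `d(a,a,b) = b` and
`(a, d(a,b,b)) ∈ [θ,θ]` where `θ = Cg^A(a,b)`. -/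
def IsDTO (L : FirstOrder.Language) (A : Type*) [L.Structure A] (d : L.Term (Fin 3)) : Prop :=
  ∀ a b : A, d.realize ![a, a, b] = b ∧
    commut L A (cgPair L A a b) (cgPair L A a b) a (d.realize ![a, b, b])

/-- A local difference term operation for a triple `(a, b, i) ∈ A² × {0,1}`
(`i = 1` is encoded as `true`). -/
def IsLDTO (L : FirstOrder.Language) (A : Type*) [L.Structure A] (t : L.Term (Fin 3))
    (s : A × A × Bool) : Prop :=
  if s.2.2 then t.realize ![s.1, s.1, s.2.1] = s.2.1
  else commut L A (cgPair L A s.1 s.2.1) (cgPair L A s.1 s.2.1) s.1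
    (t.realize ![s.1, s.2.1, s.2.1])

/-- The coordinatewise `L`-structure on a product. -/
def prodStructure (L : FirstOrder.Language) (A B : Type*) [L.Structure A] [L.Structure B] :
    L.Structure (A × B) where
  funMap f x := (funMap f fun i => (x i).1, funMap f fun i => (x i).2)
  RelMap r x := RelMap r (fun i => (x i).1) ∧ RelMap r (fun i => (x i).2)

/-- The quotient structure on `Quotient s` induced by the structure on `A`. -/
noncomputable def quotStructure (L : FirstOrder.Language) (A : Type*) [L.Structure A] (s : Setoid A) :
    L.Structure (Quotient s) where
  funMap f x := ⟦funMap f fun i => (x i).out⟧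
  RelMap r x := RelMap r fun i => (x i).out

/-!
Write `c = p(x,y,y)`, so that `d(x,y,y) = q(x,c,c)` and, by idempotence, `d(x,x,y) = q(x,x,y)`
whenever `p(x,x,y) = y`. The conditions with `i = 1` therefore pass from `p` and `q` to `d`.
For `(x,y,0) ∈ S'`, the commutator `[θ,θ]` is a congruence containing `(x,c)`, hence also
`(q(x,x,x), q(x,c,c)) = (x, d(x,y,y))`. For `(a,b,0)`, idempotence puts `c = p(a,b,b)` into
`Cg(a,b)`, so `Cg(a,c) ≤ Cg(a,b)`, and the commutator is monotone.
-/

namespace LocalDifferenceTerm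

variable {L : FirstOrder.Language} {A : Type*} [L.Structure A]

theorem isCong_forall_imp (P : (A → A → Prop) → Prop) :
    IsCong L A (fun x y => ∀ r, IsCong L A r → P r → r x y) := by
  refine ⟨⟨fun x r hr _ => hr.1.refl x, fun hxy r hr hP => hr.1.symm (hxy r hr hP),
    fun hxy hyz r hr hP => hr.1.trans (hxy r hr hP) (hyz r hr hP)⟩, ?_⟩
  intro n f x y hxy r hr hP
  exact hr.2 n f x y fun i => hxy i r hr hP

theorem isCong_cgPair (a b : A) : IsCong L A (cgPair L A a b) :=
  isCong_forall_imp _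

theorem isCong_commut (α β : A → A → Prop) : IsCong L A (commut L A α β) :=
  isCong_forall_imp _

theorem cgPair_self (a b : A) : cgPair L A a b a b :=
  fun _ _ hr => hr (a, b) rfl

theorem cgPair_le {r : A → A → Prop} (hr : IsCong L A r) {a b : A} (hab : r a b) :
    ∀ x y, cgPair L A a b x y → r x y :=
  fun _ _ hxy => hxy r hr fun _ h => (Set.mem_singleton_iff.mp h) ▸ hab

theorem termCond_mono {α α' β β' δ : A → A → Prop} (h : TermCond L A α' β' δ)
    (hα : ∀ x y, α x y → α' x y) (hβ : ∀ x y, β x y → β' x y) :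
    TermCond L A α β δ :=
  fun n t a a' haa' u v huv => h n t a a' (hα _ _ haa') u v fun i => hβ _ _ (huv i)

theorem commut_mono {α α' β β' : A → A → Prop}
    (hα : ∀ x y, α x y → α' x y) (hβ : ∀ x y, β x y → β' x y) {x y : A}
    (h : commut L A α β x y) : commut L A α' β' x y :=
  fun δ hδ hTC => h δ hδ (termCond_mono hTC hα hβ)

theorem realize_rel_of_isCong {r : A → A → Prop} (hr : IsCong L A r) {ι : Type*}
    (t : L.Term ι) {u v : ι → A} (huv : ∀ i, r (u i) (v i)) :
    r (t.realize u) (t.realize v) := by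
  induction t with
  | var i => exact huv i
  | func f ts ih => exact hr.2 _ f _ _ ih

theorem realize_const_of_isIdem (h : IsIdem L A) {ι : Type*} (t : L.Term ι) (a : A) :
    t.realize (fun _ => a) = a := by
  induction t with
  | var i => rfl
  | func f ts ih => simpa only [Term.realize, ih] using h _ f a

theorem rel_realize_of_isIdem (h : IsIdem L A) {r : A → A → Prop} (hr : IsCong L A r)
    {ι : Type*} (t : L.Term ι) {x : A} {v : ι → A} (hv : ∀ i, r x (v i)) :
    r x (t.realize v) :=
  realize_const_of_isIdem h t x ▸ realize_rel_of_isCong hr t hv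

theorem cgPair_realize_of_isIdem (h : IsIdem L A) (t : L.Term (Fin 3)) (a b : A) :
    cgPair L A a b a (t.realize ![a, b, b]) := by
  refine rel_realize_of_isIdem h (isCong_cgPair a b) t fun i => ?_
  fin_cases i
  · exact (isCong_cgPair a b).1.refl a
  all_goals exact cgPair_self a b

theorem isLDTO_true_iff (t : L.Term (Fin 3)) (x y : A) :
    IsLDTO L A t (x, y, true) ↔ t.realize ![x, x, y] = y :=
  Iff.rfl

theorem isLDTO_false_iff (t : L.Term (Fin 3)) (x y : A) :
    IsLDTO L A t (x, y, false) ↔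
      commut L A (cgPair L A x y) (cgPair L A x y) x (t.realize ![x, y, y]) :=
  Iff.rfl

/-- The term `d(x,y,z) = q(x, p(x,y,y), p(x,y,z))`. -/
def compose (p q : L.Term (Fin 3)) : L.Term (Fin 3) :=
  q.subst ![Term.var 0, p.subst ![Term.var 0, Term.var 1, Term.var 1],
    (p.subst ![Term.var 0, Term.var 1, Term.var 2])]

theorem realize_compose (p q : L.Term (Fin 3)) (x y z : A) :
    (compose p q).realize ![x, y, z] =
      q.realize ![x, p.realize ![x, y, y], p.realize ![x, y, z] ] := by
  rw [compose, Term.realize_subst]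
  congr 1
  funext i
  fin_cases i
  · rfl
  all_goals
    refine Term.realize_subst.trans (congrArg (p.realize ·) (funext fun j => ?_))
    fin_cases j <;> rfl

end LocalDifferenceTerm

open LocalDifferenceTerm in
theorem stmt6_general {L : FirstOrder.Language} (A : Type*) [L.Structure A]
    (hidem : IsIdem L A) (S' : Set (A × A × Bool)) (a b : A) (p q : L.Term (Fin 3))
    (hp : ∀ s ∈ S', IsLDTO L A p s)
    (hq : ∀ s ∈ ({s : A × A × Bool | s ∈ S' ∧ s.2.2 = true} ∪
        {(a, p.realize ![a, b, b], false)} : Set (A × A × Bool)),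
      IsLDTO L A q s) :
    ∀ s ∈ S' ∪ {(a, b, false)},
      IsLDTO L A
        (q.subst ![Term.var 0, p.subst ![Term.var 0, Term.var 1, Term.var 1],
          (p.subst ![Term.var 0, Term.var 1, Term.var 2])]) s := by
  show ∀ s ∈ S' ∪ {(a, b, false)}, IsLDTO L A (compose p q) s
  rintro ⟨x, y, _ | _⟩ (hs | hs)
  · rw [isLDTO_false_iff, realize_compose]
    refine rel_realize_of_isIdem hidem (isCong_commut _ _) q fun i => ?_
    fin_cases i
    · exact (isCong_commut _ _).1.refl x
    all_goals exact hp _ hs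
  · cases hs
    rw [isLDTO_false_iff, realize_compose]
    have hle := cgPair_le (isCong_cgPair a b) (cgPair_realize_of_isIdem hidem p a b)
    exact commut_mono hle hle (hq _ (Or.inr rfl))
  · have hpx : p.realize ![x, x, x] = x := by
      rw [show (![x, x, x] : Fin 3 → A) = fun _ => x by funext i; fin_cases i <;> rfl]
      exact realize_const_of_isIdem hidem p x
    rw [isLDTO_true_iff, realize_compose, hpx, (isLDTO_true_iff p x y).mp (hp _ hs)]
    exact hq _ (Or.inl ⟨hs, rfl⟩)
  · simp at hs

theorem stmt6 {L : FirstOrder.Language} [L.IsAlgebraic] (A : Type*) [L.Structure A]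
    (hidem : IsIdem L A) (S' : Set (A × A × Bool)) (a b : A) (p q : L.Term (Fin 3))
    (hp : ∀ s ∈ S', IsLDTO L A p s)
    (hq : ∀ s ∈ ({s : A × A × Bool | s ∈ S' ∧ s.2.2 = true} ∪
        {(a, p.realize ![a, b, b], false)} : Set (A × A × Bool)),
      IsLDTO L A q s) :
    ∀ s ∈ S' ∪ {(a, b, false)},
      IsLDTO L A
        (q.subst ![Term.var 0, p.subst ![Term.var 0, Term.var 1, Term.var 1],
          (p.subst ![Term.var 0, Term.var 1, Term.var 2])]) s :=
  stmt6_general A hidem S' a b p q hp hq
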